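/- If an entire function f satisfies f(z) + f(z+1) = 0 and f(z) + e^{−2πiz−πiτ} f(z+τ) = 0 for all z ∈ ℂ (with fixed τ ∈ ℍ), then f is identically zero. -/

import Mathlib

open Real

set_option maxHeartbeats 1000000 in
/-- An entire function satisfying `f(z) + f(z+1) = 0` and
`f(z) + e^{-2πiz-πiτ} f(z+τ) = 0` is identically zero. -/
theorem entire_doubly_antiperiodic_eq_zero (τ : ℂ) (hτ : 0 < τ.im) (f : ℂ → ℂ)
    (hf : Differentiable ℂ f)
    (h1 : ∀ z : ℂ, f z + f (z + 1) = 0)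
    (h2 : ∀ z : ℂ, f z + Complex.exp (-2 * (π : ℂ) * Complex.I * z - (π : ℂ) * Complex.I * τ) *
        f (z + τ) = 0) :
    ∀ z : ℂ, f z = 0 := by
  have e1 : ∀ z : ℂ, f (z + 1) = - f z := fun z => by linear_combination h1 z
  have n1 : ∀ z : ℂ, ‖f (z + 1)‖ = ‖f z‖ := fun z => by rw [e1, norm_neg]
  -- norm relation in the τ direction
  have n2 : ∀ z : ℂ, ‖f (z + τ)‖ = Real.exp (-(2 * π * z.im + π * τ.im)) * ‖f z‖ := by
    intro z
    have hA : f z = - (Complex.exp (-2 * (π : ℂ) * Complex.I * z - (π : ℂ) * Complex.I * τ) *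
        f (z + τ)) := by linear_combination h2 z
    have hB : ‖f z‖ = Real.exp (2 * π * z.im + π * τ.im) * ‖f (z + τ)‖ := by
      rw [hA, norm_neg, norm_mul, Complex.norm_exp]
      congr 2
      simp [Complex.sub_re, Complex.mul_re, Complex.mul_im, Complex.I_re, Complex.I_im]
    rw [hB, ← mul_assoc, ← Real.exp_add]
    have h0 : -(2 * π * z.im + π * τ.im) + (2 * π * z.im + π * τ.im) = 0 := by ring
    rw [h0, Real.exp_zero, one_mul]
  -- integer translates in the 1 direction
  have P : ∀ n : ℤ, ∀ z : ℂ, ‖f (z + n)‖ = ‖f z‖ := by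
    intro n
    induction n using Int.induction_on with
    | zero => intro z; simp
    | succ k ih =>
        intro z
        have hz : z + (((k : ℤ) + 1 : ℤ) : ℂ) = (z + ((k : ℤ) : ℂ)) + 1 := by push_cast; ring
        rw [hz, n1, ih]
    | pred k ih =>
        intro z
        have h' := n1 (z + ((-(k : ℤ) - 1 : ℤ) : ℂ))
        have hz : (z + ((-(k : ℤ) - 1 : ℤ) : ℂ)) + 1 = z + ((-(k : ℤ) : ℤ) : ℂ) := by
          push_cast; ring
        rw [hz] at h'
        rw [← h', ih]
  -- integer translates in the τ direction
  have Q : ∀ m : ℤ, ∀ z : ℂ, ‖f (z + m * τ)‖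
      = Real.exp (-(2 * π * m * z.im + π * (m : ℝ) ^ 2 * τ.im)) * ‖f z‖ := by
    intro m
    induction m using Int.induction_on with
    | zero => intro z; simp
    | succ k ih =>
        intro z
        have hz : z + (((k : ℤ) + 1 : ℤ) : ℂ) * τ = (z + ((k : ℤ) : ℂ) * τ) + τ := by
          push_cast; ring
        rw [hz, n2, ih, ← mul_assoc, ← Real.exp_add]
        congr 1
        have him : (z + ((k : ℤ) : ℂ) * τ).im = z.im + (k : ℝ) * τ.im := by
          simp [Complex.add_im, Complex.mul_im]
        rw [him]; push_cast; ring
    | pred k ih =>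
        intro z
        set w : ℂ := z + ((-(k : ℤ) - 1 : ℤ) : ℂ) * τ with hw
        have hz : w + τ = z + ((-(k : ℤ) : ℤ) : ℂ) * τ := by rw [hw]; push_cast; ring
        have h' := n2 w
        rw [hz, ih] at h'
        have hwim : w.im = z.im + (-(k : ℝ) - 1) * τ.im := by
          rw [hw]; push_cast; simp [Complex.add_im, Complex.mul_im]
        have key : ‖f w‖ = Real.exp (2 * π * w.im + π * τ.im) *
            (Real.exp (-(2 * π * ((-(k : ℤ) : ℤ) : ℝ) * z.im
              + π * ((-(k : ℤ) : ℤ) : ℝ) ^ 2 * τ.im)) * ‖f z‖) := by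
          rw [h', ← mul_assoc, ← Real.exp_add]
          have h0 : 2 * π * w.im + π * τ.im + -(2 * π * w.im + π * τ.im) = 0 := by ring
          rw [h0, Real.exp_zero, one_mul]
        rw [key, ← mul_assoc, ← Real.exp_add]
        congr 1
        rw [hwim]; push_cast; ring
  -- bound on the fundamental square
  have hcont : ContinuousOn (fun p : ℝ × ℝ => ‖f ((p.1 : ℂ) + (p.2 : ℂ) * τ)‖)
      (Set.Icc (0 : ℝ) 1 ×ˢ Set.Icc (0 : ℝ) 1) := by
    apply Continuous.continuousOn
    exact (hf.continuous.comp ((Complex.continuous_ofReal.comp continuous_fst).add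
      ((Complex.continuous_ofReal.comp continuous_snd).mul continuous_const))).norm
  obtain ⟨p₀, hp₀, hmax⟩ := (isCompact_Icc.prod isCompact_Icc).exists_isMaxOn
    ((Set.nonempty_Icc.2 zero_le_one).prod (Set.nonempty_Icc.2 zero_le_one)) hcont
  set C : ℝ := ‖f ((p₀.1 : ℂ) + (p₀.2 : ℂ) * τ)‖ with hC
  have hτ0 : τ.im ≠ 0 := ne_of_gt hτ
  -- global bound
  have hbound : ∀ z : ℂ, ‖f z‖ ≤ Real.exp (π * τ.im) * C := by
    intro z
    obtain ⟨x, y, hxy⟩ : ∃ x y : ℝ, z = (x : ℂ) + (y : ℂ) * τ := by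
      refine ⟨z.re - z.im / τ.im * τ.re, z.im / τ.im, ?_⟩
      apply Complex.ext
      · simp
      · simp
        field_simp
    have hdec : ((x : ℂ) + (y : ℂ) * τ)
        = ((((x - ⌊x⌋ : ℝ) : ℂ) + ((y - ⌊y⌋ : ℝ) : ℂ) * τ) + ((⌊y⌋ : ℤ) : ℂ) * τ)
          + ((⌊x⌋ : ℤ) : ℂ) := by push_cast; ring
    rw [hxy, hdec, P, Q]
    have him : (((x - ⌊x⌋ : ℝ) : ℂ) + ((y - ⌊y⌋ : ℝ) : ℂ) * τ).im
        = (y - ⌊y⌋) * τ.im := by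
      simp [Complex.add_im, Complex.mul_im]
    rw [him]
    have hs0 : 0 ≤ y - ⌊y⌋ := sub_nonneg.2 (Int.floor_le y)
    have hs1 : y - ⌊y⌋ ≤ 1 := by linarith [Int.lt_floor_add_one y]
    have ht0 : 0 ≤ x - ⌊x⌋ := sub_nonneg.2 (Int.floor_le x)
    have ht1 : x - ⌊x⌋ ≤ 1 := by linarith [Int.lt_floor_add_one x]
    have hexp : Real.exp (-(2 * π * ((⌊y⌋ : ℤ) : ℝ) * ((y - ⌊y⌋) * τ.im)
        + π * ((⌊y⌋ : ℤ) : ℝ) ^ 2 * τ.im)) ≤ Real.exp (π * τ.im) := by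
      apply Real.exp_le_exp.2
      have h1' : -(2 * π * ((⌊y⌋ : ℤ) : ℝ) * ((y - ⌊y⌋) * τ.im)
          + π * ((⌊y⌋ : ℤ) : ℝ) ^ 2 * τ.im)
          = π * τ.im * ((y - ⌊y⌋) ^ 2 - (((⌊y⌋ : ℤ) : ℝ) + (y - ⌊y⌋)) ^ 2) := by ring
      rw [h1']
      have hsq : (y - ⌊y⌋) ^ 2 - (((⌊y⌋ : ℤ) : ℝ) + (y - ⌊y⌋)) ^ 2 ≤ 1 := by
        nlinarith [sq_nonneg (((⌊y⌋ : ℤ) : ℝ) + (y - ⌊y⌋))]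
      have hp : (0 : ℝ) ≤ π * τ.im := (mul_pos Real.pi_pos hτ).le
      have := mul_le_mul_of_nonneg_left hsq hp
      linarith
    have hfs : ‖f (((x - ⌊x⌋ : ℝ) : ℂ) + ((y - ⌊y⌋ : ℝ) : ℂ) * τ)‖ ≤ C := by
      have := isMaxOn_iff.1 hmax (x - ⌊x⌋, y - ⌊y⌋) (Set.mk_mem_prod ⟨ht0, ht1⟩ ⟨hs0, hs1⟩)
      simpa using this
    exact mul_le_mul hexp hfs (norm_nonneg _) (Real.exp_pos _).le
  -- Liouville
  have hb : Bornology.IsBounded (Set.range f) := by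
    rw [isBounded_iff_forall_norm_le]
    exact ⟨Real.exp (π * τ.im) * C, by rintro _ ⟨z, rfl⟩; exact hbound z⟩
  intro z
  have hconst := hf.apply_eq_apply_of_bounded hb (z + 1) z
  have h := h1 z
  rw [hconst] at h
  linear_combination h / 2
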